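/- arXiv:1807.06864 — 3 statements merged into one kernel-verified Lean document; each statement's English description precedes it below -/
import Mathlib

section
/- Let (A_1, …, A_n) and (B_1, …, B_n) be commuting n-tuples of real orthogonal k×k matrices. If there exists a complex unitary matrix U ∈ U(k) with U⁻¹ A_j U = B_j for all j = 1, …, n (where real matrices are regarded as complex matrices via ℝ ⊆ ℂ), then there exists a real orthogonal matrix Q ∈ O(k) with Q⁻¹ A_j Q = B_j for all j = 1, …, n. -/
/-!
Writing `U = X + i Y` with `X, Y` real, both `X` and `Y` intertwine the two tuples, hence so
does `X + t Y` for every real `t`; since `t ↦ det (X + t Y)` is a polynomial that does not vanish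
at `t = i`, some real `X + t Y` is invertible. An invertible intertwiner `S` of two tuples of
unitaries can be replaced by the unitary factor `S |S|⁻¹` of its polar decomposition, because
`|S| = √(S* S)` commutes with the second tuple.
-/

open Polynomial

theorem mul_star_eq_star_mul_of_mem_unitary {A : Type*} [Monoid A] [StarMul A] {u v s : A}
    (hu : u ∈ unitary A) (hv : v ∈ unitary A) (h : u * s = s * v) :
    v * star s = star s * u := by
  have h' : star s * star u = star v * star s := by simpa using congrArg star h
  calc v * star s = v * (star s * star u) * u := by
        rw [mul_assoc, mul_assoc, Unitary.star_mul_self_of_mem hu, mul_one]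
    _ = star s * u := by
        rw [h', ← mul_assoc, Unitary.mul_star_self_of_mem hv, one_mul]

section Polar

variable {A : Type*} [Ring A] [StarRing A] [Algebra ℝ A] [TopologicalSpace A]
  [IsTopologicalRing A] [T2Space A] [ContinuousFunctionalCalculus ℝ A IsSelfAdjoint]
  [PartialOrder A] [StarOrderedRing A] [NonnegSpectrumClass ℝ A]

theorem commute_cfcAbs_of_mul_eq_mul {u v s : A} (hu : u ∈ unitary A) (hv : v ∈ unitary A)
    (h : u * s = s * v) : Commute (CFC.abs s) v := by
  refine Commute.cfcₙ_nnreal ?_ NNReal.sqrt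
  calc star s * s * v = star s * (u * s) := by rw [mul_assoc, h]
    _ = v * (star s * s) := by
      rw [← mul_assoc, ← mul_star_eq_star_mul_of_mem_unitary hu hv h, mul_assoc]

theorem isUnit_cfcAbs {s : A} (hs : IsUnit s) : IsUnit (CFC.abs s) :=
  (CFC.isUnit_sqrt_iff _ (star_mul_self_nonneg s)).2 (hs.star.mul hs)

theorem exists_mem_unitary_forall_mul_eq_mul {ι : Type*} {u v : ι → A}
    (hu : ∀ i, u i ∈ unitary A) (hv : ∀ i, v i ∈ unitary A) {s : A} (hs : IsUnit s)
    (h : ∀ i, u i * s = s * v i) : ∃ w ∈ unitary A, ∀ i, u i * w = w * v i := by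
  obtain ⟨S, rfl⟩ := hs
  obtain ⟨P, hP⟩ := isUnit_cfcAbs S.isUnit
  have hP_star : star P = P :=
    Units.ext (by simpa [hP] using (CFC.abs_nonneg (S : A)).isSelfAdjoint.star_eq)
  have hP_mul_self : P * P = star S * S :=
    Units.ext (by simpa [hP] using CFC.abs_mul_abs (S : A))
  have hW : star (S * P⁻¹) * (S * P⁻¹) = 1 := by
    rw [star_mul, star_inv, hP_star]
    calc P⁻¹ * star S * (S * P⁻¹) = P⁻¹ * (star S * S) * P⁻¹ := by group
      _ = 1 := by rw [← hP_mul_self]; group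
  have hW' : S * P⁻¹ * star (S * P⁻¹) = 1 := by
    rw [mul_eq_one_iff_eq_inv.1 hW, mul_inv_cancel]
  refine ⟨↑(S * P⁻¹), Unitary.mem_iff.2 ⟨?_, ?_⟩, fun i => ?_⟩
  · rw [← Units.coe_star, ← Units.val_mul, hW, Units.val_one]
  · rw [← Units.coe_star, ← Units.val_mul, hW', Units.val_one]
  · have hc : Commute (↑P⁻¹ : A) (v i) :=
      (hP ▸ commute_cfcAbs_of_mul_eq_mul (hu i) (hv i) (h i)).units_inv_left
    rw [Units.val_mul, ← mul_assoc, h i, mul_assoc, ← hc.eq, mul_assoc]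

end Polar

namespace Matrix

variable {l m : Type*} [Fintype l] [Fintype m]

theorem mul_map_re_of_map_ofReal_mul {A : Matrix l l ℝ} {B : Matrix m m ℝ} {U : Matrix l m ℂ}
    (h : A.map (fun x => (x : ℂ)) * U = U * B.map (fun x => (x : ℂ))) :
    A * U.map Complex.re = U.map Complex.re * B := by
  ext i j
  simpa [mul_apply, Complex.re_sum] using congrArg Complex.re (congrFun₂ h i j)

theorem mul_map_im_of_map_ofReal_mul {A : Matrix l l ℝ} {B : Matrix m m ℝ} {U : Matrix l m ℂ}
    (h : A.map (fun x => (x : ℂ)) * U = U * B.map (fun x => (x : ℂ))) :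
    A * U.map Complex.im = U.map Complex.im * B := by
  ext i j
  simpa [mul_apply, Complex.im_sum] using congrArg Complex.im (congrFun₂ h i j)

variable [DecidableEq m]

theorem exists_det_map_re_add_smul_map_im_ne_zero {U : Matrix m m ℂ} (hU : U.det ≠ 0) :
    ∃ t : ℝ, (U.map Complex.re + t • U.map Complex.im).det ≠ 0 := by
  set p : ℝ[X] := ((U.map Complex.re).map C + (X : ℝ[X]) • (U.map Complex.im).map C).det
  have hp_I : aeval Complex.I p = U.det := by
    rw [AlgHom.map_det]
    congr 1
    ext i j
    apply Complex.ext <;> simp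
  have hp_eval (t : ℝ) : p.eval t = (U.map Complex.re + t • U.map Complex.im).det := by
    rw [← coe_evalRingHom, RingHom.map_det]
    congr 1
    ext i j
    simp only [map_map, RingHom.mapMatrix_apply, coe_evalRingHom, map_apply, add_apply,
      Function.comp_apply, smul_apply, smul_eq_mul, X_mul_C, eval_add, eval_C, eval_mul, eval_X,
      add_right_inj]
    ring
  have hp : p ≠ 0 := fun h0 => hU (by rw [← hp_I, h0, map_zero])
  obtain ⟨t, ht⟩ := (finite_setOfPred_isRoot hp).infinite_compl.nonempty
  exact ⟨t, hp_eval t ▸ ht⟩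

theorem exists_isUnit_forall_mul_eq_mul_of_map_ofReal {ι : Type*} {A B : ι → Matrix m m ℝ}
    {U : Matrix m m ℂ} (hU : IsUnit U)
    (h : ∀ i, (A i).map (fun x => (x : ℂ)) * U = U * (B i).map (fun x => (x : ℂ))) :
    ∃ S : Matrix m m ℝ, IsUnit S ∧ ∀ i, A i * S = S * B i := by
  obtain ⟨t, ht⟩ :=
    exists_det_map_re_add_smul_map_im_ne_zero ((isUnit_iff_isUnit_det U).1 hU).ne_zero
  refine ⟨_, (isUnit_iff_isUnit_det _).2 ht.isUnit, fun i => ?_⟩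
  rw [mul_add, add_mul, Matrix.mul_smul, Matrix.smul_mul, mul_map_re_of_map_ofReal_mul (h i),
    mul_map_im_of_map_ofReal_mul (h i)]

theorem inv_mul_mul_eq_iff_mul_eq_mul {R : Type*} [CommRing R] {U A B : Matrix m m R}
    (hU : IsUnit U) : U⁻¹ * A * U = B ↔ A * U = U * B := by
  let _ := hU.invertible
  rw [mul_assoc, inv_mul_eq_iff_eq_mul_of_invertible]

end Matrix

theorem orthogonal_tuples_unitarily_conjugate_implies_orthogonally_conjugate_general
    (n k : ℕ) (A B : Fin n → Matrix (Fin k) (Fin k) ℝ)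
    (hA : ∀ j, A j ∈ Matrix.orthogonalGroup (Fin k) ℝ)
    (hB : ∀ j, B j ∈ Matrix.orthogonalGroup (Fin k) ℝ)
    (hU : ∃ U ∈ Matrix.unitaryGroup (Fin k) ℂ,
      ∀ j, U⁻¹ * (A j).map (fun x => (x : ℂ)) * U = (B j).map (fun x => (x : ℂ))) :
    ∃ Q ∈ Matrix.orthogonalGroup (Fin k) ℝ, ∀ j, Q⁻¹ * A j * Q = B j := by
  obtain ⟨U, hU, hAU⟩ := hU
  have hU_unit : IsUnit U := (Unitary.toUnits ⟨U, hU⟩).isUnit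
  obtain ⟨S, hS, hAS⟩ := Matrix.exists_isUnit_forall_mul_eq_mul_of_map_ofReal hU_unit
    fun j => (Matrix.inv_mul_mul_eq_iff_mul_eq_mul hU_unit).1 (hAU j)
  obtain ⟨Q, hQ, hAQ⟩ :
      ∃ Q ∈ Matrix.orthogonalGroup (Fin k) ℝ, ∀ j, A j * Q = Q * B j := by
    open scoped MatrixOrder in exact exists_mem_unitary_forall_mul_eq_mul hA hB hS hAS
  exact ⟨Q, hQ, fun j =>
    (Matrix.inv_mul_mul_eq_iff_mul_eq_mul (Unitary.toUnits ⟨Q, hQ⟩).isUnit).2 (hAQ j)⟩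

/-- If two commuting `n`-tuples of real orthogonal `k × k` matrices are simultaneously
conjugate by a complex unitary matrix (regarding real matrices as complex matrices via
`ℝ ⊆ ℂ`), then they are simultaneously conjugate by a real orthogonal matrix. -/
theorem orthogonal_tuples_unitarily_conjugate_implies_orthogonally_conjugate
    (n k : ℕ) (A B : Fin n → Matrix (Fin k) (Fin k) ℝ)
    (hA : ∀ j, A j ∈ Matrix.orthogonalGroup (Fin k) ℝ)
    (hB : ∀ j, B j ∈ Matrix.orthogonalGroup (Fin k) ℝ)
    (hcommA : ∀ i j, A i * A j = A j * A i)
    (hcommB : ∀ i j, B i * B j = B j * B i)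
    (hU : ∃ U ∈ Matrix.unitaryGroup (Fin k) ℂ,
      ∀ j, U⁻¹ * (A j).map (fun x => (x : ℂ)) * U = (B j).map (fun x => (x : ℂ))) :
    ∃ Q ∈ Matrix.orthogonalGroup (Fin k) ℝ, ∀ j, Q⁻¹ * A j * Q = B j :=
  orthogonal_tuples_unitarily_conjugate_implies_orthogonally_conjugate_general n k A B hA hB hU
end

section
/- Let (A_1, …, A_n) be a commuting n-tuple of unitary k×k complex matrices, and suppose there exists a unitary matrix V ∈ U(k) such that V⁻¹ A_j V = conj(A_j) for all j = 1, …, n, where conj(A_j) denotes the entrywise complex conjugate matrix. Then there exists a unitary matrix W ∈ U(k) such that every matrix W⁻¹ A_j W has real entries (and hence is a real orthogonal matrix). -/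
/-!
Diagonalise the commuting unitaries simultaneously, `A j * U = U * diagonal (d j)`. Then
`Q = U⁻¹ V conj(U)` is invertible and intertwines `diagonal (d j)` with its conjugate, so some
permutation `σ` satisfies `d j ∘ σ = conj ∘ d j` for all `j`; regrouping the fibres of
`p ↦ (d j p)ⱼ` turns `σ` into an involution `τ` with the same property. If `P` is the permutation
matrix of `τ`, the unitary `T = c • 1 + conj c • P` with `c = (1 - i) / 2` satisfies
`conj T = P * T`, which makes every `star T * diagonal (d j) * T` real. Take `W = U * T`.
-/

open Matrix ComplexConjugate ComplexStarModule

theorem Function.exists_involutive_comp_eq_of_perm {α β : Type*} {f : α → β} {g : β → β}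
    (hg : Function.Involutive g) (σ : Equiv.Perm α) (hσ : ∀ a, f (σ a) = g (f a)) :
    ∃ τ : α → α, Function.Involutive τ ∧ ∀ a, f (τ a) = g (f a) := by
  -- `τ` follows `σ` from the fibre over `b` to the one over `g b` when `b < g b`, and `σ⁻¹` back
  let : LinearOrder β := WellOrderingRel.isWellOrder.linearOrder
  have hσ_symm : ∀ a, f (σ.symm a) = g (f a) := fun a => by
    rw [← hg (f (σ.symm a)), ← hσ, σ.apply_symm_apply]
  refine ⟨fun a => if f a < g (f a) then σ a else if g (f a) < f a then σ.symm a else a,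
    fun a => ?_, fun a => ?_⟩
  · rcases lt_trichotomy (f a) (g (f a)) with h | h | h
    · simp [h, hσ, hg (f a), h.not_gt]
    · simp [← h]
    · simp [h, hσ_symm, hg (f a), h.not_gt]
  · rcases lt_trichotomy (f a) (g (f a)) with h | h | h
    · simp [h, hσ]
    · simp [← h]
    · simp [h, h.not_gt, hσ_symm]

theorem Matrix.exists_perm_forall_apply_ne_zero_of_det_ne_zero {R m : Type*} [CommRing R]
    [Fintype m] [DecidableEq m] {Q : Matrix m m R} (hQ : Q.det ≠ 0) :
    ∃ σ : Equiv.Perm m, ∀ p, Q (σ p) p ≠ 0 := by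
  contrapose! hQ
  rw [det_apply]
  refine Finset.sum_eq_zero fun σ _ => ?_
  obtain ⟨p, hp⟩ := hQ σ
  rw [Finset.prod_eq_zero (f := fun i => Q (σ i) i) (Finset.mem_univ p) hp, smul_zero]

theorem Matrix.exists_perm_forall_apply_eq_of_diagonal_mul_eq_mul_diagonal {R m ι : Type*}
    [CommRing R] [IsDomain R] [Fintype m] [DecidableEq m] {d d' : ι → m → R}
    {Q : Matrix m m R} (hQ : Q.det ≠ 0) (h : ∀ i, diagonal (d i) * Q = Q * diagonal (d' i)) :
    ∃ σ : Equiv.Perm m, ∀ i p, d i (σ p) = d' i p := by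
  obtain ⟨σ, hσ⟩ := exists_perm_forall_apply_ne_zero_of_det_ne_zero hQ
  refine ⟨σ, fun i p => mul_right_cancel₀ (hσ p) ?_⟩
  simpa [mul_comm] using congr_fun₂ (h i) (σ p) p

theorem Matrix.exists_perm_forall_apply_eq_conj_of_inv_mul_mul_eq_map_conj {m ι : Type*}
    [Fintype m] [DecidableEq m] {A : ι → Matrix m m ℂ} {U V : Matrix m m ℂ} {d : ι → m → ℂ}
    (hU : IsUnit U.det) (hV : IsUnit V.det) (hAU : ∀ i, A i * U = U * diagonal (d i))
    (hAV : ∀ i, V⁻¹ * A i * V = (A i).map conj) :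
    ∃ σ : Equiv.Perm m, ∀ i p, d i (σ p) = conj (d i p) := by
  refine exists_perm_forall_apply_eq_of_diagonal_mul_eq_mul_diagonal
    (Q := U⁻¹ * V * U.map conj) ?_ fun i => ?_
  · rw [det_mul, det_mul, ← RingHom.mapMatrix_apply, ← RingHom.map_det]
    exact (((isUnit_nonsing_inv_det U hU).mul hV).mul (hU.map _)).ne_zero
  · calc diagonal (d i) * (U⁻¹ * V * U.map conj)
        = U⁻¹ * (A i * U) * U⁻¹ * V * U.map conj := by
          rw [hAU]
          simp only [Matrix.mul_assoc, nonsing_inv_mul_cancel_left _ _ hU]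
      _ = U⁻¹ * V * (V⁻¹ * A i * V) * U.map conj := by
          simp only [Matrix.mul_assoc, mul_nonsing_inv_cancel_left _ _ hU,
            mul_nonsing_inv_cancel_left _ _ hV]
      _ = U⁻¹ * V * (A i * U).map conj := by
          rw [hAV, Matrix.map_mul, Matrix.mul_assoc (U⁻¹ * V)]
      _ = U⁻¹ * V * U.map conj * diagonal (fun p => conj (d i p)) := by
          rw [hAU, Matrix.map_mul, diagonal_map (map_zero _)]
          simp only [Matrix.mul_assoc]

theorem LinearMap.IsSymmetric.exists_orthonormalBasis_forall_apply_eq_smul_of_commute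
    {𝕜 E ι m : Type*} [RCLike 𝕜] [NormedAddCommGroup E] [InnerProductSpace 𝕜 E]
    [FiniteDimensional 𝕜 E] [Fintype m] {T : ι → E →ₗ[𝕜] E} (hT : ∀ i, (T i).IsSymmetric)
    (hC : Pairwise fun i j => Commute (T i) (T j))
    (hm : Module.finrank 𝕜 E = Fintype.card m) :
    ∃ (b : OrthonormalBasis m 𝕜 E) (χ : m → ι → 𝕜), ∀ p i, T i (b p) = χ p i • b p := by
  classical
  let V : (ι → 𝕜) → Submodule 𝕜 E := fun χ => ⨅ i, Module.End.eigenspace (T i) (χ i)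
  have hV₀ : DirectSum.IsInternal V := directSum_isInternal_of_pairwise_commute hT hC
  let _ : Fintype {χ // V χ ≠ ⊥} := hV₀.submodule_iSupIndep.fintypeNeBotOfFiniteDimensional
  have hV : DirectSum.IsInternal fun χ : {χ // V χ ≠ ⊥} => V χ :=
    DirectSum.isInternal_ne_bot_iff.mpr hV₀
  have hV' : OrthogonalFamily 𝕜 (fun χ : {χ // V χ ≠ ⊥} => V χ) fun χ => (V χ).subtypeₗᵢ :=
    (orthogonalFamily_iInf_eigenspaces hT).comp Subtype.val_injective
  let e := Fintype.equivFin m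
  refine ⟨(hV.subordinateOrthonormalBasis hm hV').reindex e.symm,
    fun p => (hV.subordinateOrthonormalBasisIndex hm (e p) hV').1, fun p i => ?_⟩
  have hb := hV.subordinateOrthonormalBasis_subordinate hm (e p) hV'
  simpa using Module.End.mem_eigenspace_iff.mp ((Submodule.mem_iInf _).mp hb i)

theorem Matrix.exists_unitary_forall_mul_eq_mul_diagonal_of_isHermitian
    {𝕜 m ι : Type*} [RCLike 𝕜] [Fintype m] [DecidableEq m] {H : ι → Matrix m m 𝕜}
    (hH : ∀ i, (H i).IsHermitian) (hC : Pairwise fun i j => Commute (H i) (H j)) :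
    ∃ U ∈ unitaryGroup m 𝕜, ∃ d : ι → m → 𝕜, ∀ i, H i * U = U * diagonal (d i) := by
  obtain ⟨b, χ, hb⟩ :=
    LinearMap.IsSymmetric.exists_orthonormalBasis_forall_apply_eq_smul_of_commute
      (T := fun i => toEuclideanLin (H i)) (fun i => isSymmetric_toEuclideanLin_iff.mpr (hH i))
      (fun i j hij => by
        simpa [Commute, SemiconjBy, Module.End.mul_eq_comp] using
          congrArg toEuclideanLin (hC hij).eq)
      finrank_euclideanSpace
  refine ⟨(EuclideanSpace.basisFun m 𝕜).toBasis.toMatrix b.toBasis,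
    (EuclideanSpace.basisFun m 𝕜).toMatrix_orthonormalBasis_mem_unitary b,
    fun i p => χ p i, fun i => ?_⟩
  ext q p
  rw [mul_diagonal]
  simpa [Module.Basis.toMatrix_apply, mul_apply, mulVec, dotProduct, mul_comm] using
    congrArg (fun v : EuclideanSpace 𝕜 m => v q) (hb p i)

section StarModule

variable {A : Type*} [Ring A] [StarRing A] [Algebra ℂ A] [StarModule ℂ A]

theorem Commute.realPart_left {x y : A} (h : Commute x y) (h' : Commute (star x) y) :
    Commute (ℜ x : A) y := by
  rw [realPart_apply_coe]
  exact (h.add_left h').smul_left _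

theorem Commute.imaginaryPart_left {x y : A} (h : Commute x y) (h' : Commute (star x) y) :
    Commute (ℑ x : A) y := by
  rw [imaginaryPart_apply_coe]
  exact ((h.sub_left h').smul_left _).smul_left _

end StarModule

theorem Commute.star_right_of_mem_unitary {R : Type*} [Monoid R] [StarMul R] {x u : R}
    (hu : u ∈ unitary R) (h : Commute x u) : Commute x (star u) :=
  h.units_inv_right (u := Unitary.toUnits ⟨u, hu⟩)

theorem Matrix.exists_unitary_forall_mul_eq_mul_diagonal_of_commute {m ι : Type*} [Fintype m]
    [DecidableEq m] {A : ι → Matrix m m ℂ} (hC : ∀ i j, Commute (A i) (A j))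
    (hC' : ∀ i j, Commute (A i) (star (A j))) :
    ∃ U ∈ unitaryGroup m ℂ, ∃ d : ι → m → ℂ, ∀ i, A i * U = U * diagonal (d i) := by
  let H : ι ⊕ ι → Matrix m m ℂ := Sum.elim (fun i => ℜ (A i)) (fun i => ℑ (A i))
  have hHA : ∀ p j, Commute (H p) (A j) ∧ Commute (H p) (star (A j)) := by
    rintro (i | i) j
    · exact ⟨(hC i j).realPart_left (hC' j i).symm,
        (hC' i j).realPart_left (hC i j).star_star⟩
    · exact ⟨(hC i j).imaginaryPart_left (hC' j i).symm,
        (hC' i j).imaginaryPart_left (hC i j).star_star⟩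
  have hH : ∀ p q, Commute (H p) (H q) := by
    rintro p (j | j)
    · exact ((hHA p j).1.symm.realPart_left (hHA p j).2.symm).symm
    · exact ((hHA p j).1.symm.imaginaryPart_left (hHA p j).2.symm).symm
  obtain ⟨U, hU, d, hd⟩ := exists_unitary_forall_mul_eq_mul_diagonal_of_isHermitian
    (H := H) (by rintro (i | i) <;> exact isHermitian_iff_isSelfAdjoint.mpr (Subtype.prop _))
    (fun p q _ => hH p q)
  refine ⟨U, hU, fun i => d (.inl i) + Complex.I • d (.inr i), fun i => ?_⟩
  have h := hd (.inl i)
  have h' := hd (.inr i)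
  simp only [H, Sum.elim_inl, Sum.elim_inr] at h h'
  show A i * U = U * diagonal (d (.inl i) + Complex.I • d (.inr i))
  rw [← realPart_add_I_smul_imaginaryPart (A i), add_mul, smul_mul_assoc, h, h',
    ← mul_smul_comm, ← mul_add, ← diagonal_smul, diagonal_add]
  rfl

theorem Matrix.permMatrix_mul_diagonal_mul_permMatrix_inv {m R : Type*} [Fintype m]
    [DecidableEq m] [CommRing R] (σ : Equiv.Perm m) (d : m → R) :
    σ.permMatrix R * diagonal d * σ⁻¹.permMatrix R = diagonal (d ∘ σ) := by
  rw [PEquiv.toMatrix_toPEquiv_mul, PEquiv.mul_toMatrix_toPEquiv, submatrix_submatrix]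
  exact submatrix_diagonal_equiv d σ

theorem Matrix.exists_unitary_map_conj_eq_mul {m : Type*} [Fintype m] [DecidableEq m]
    {P : Matrix m m ℂ} (hP : P * P = 1) (hPs : star P = P) (hPc : P.map conj = P) :
    ∃ T ∈ unitaryGroup m ℂ, T.map conj = P * T := by
  -- `c • 1 + conj c • P` acts by `1` and `-i` on the `±1`-eigenspaces of `P`
  obtain ⟨c, h1, h2⟩ : ∃ c : ℂ, conj c * c + c * conj c = 1 ∧ conj c * conj c + c * c = 0 :=
    ⟨⟨1 / 2, -1 / 2⟩, by simp [Complex.ext_iff]; norm_num, by simp [Complex.ext_iff]; norm_num⟩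
  refine ⟨c • 1 + conj c • P, ?_, ?_⟩
  · rw [mem_unitaryGroup_iff']
    simp only [star_add, star_smul, star_one, hPs, Complex.star_def, Complex.conj_conj, add_mul,
      mul_add, smul_mul_smul, one_mul, mul_one, hP]
    linear_combination (norm := module) h1 • (1 : Matrix m m ℂ) + h2 • P
  · rw [Matrix.map_add _ (map_add _), map_smul' _ _ _ (map_mul _), map_smul' _ _ _ (map_mul _),
      Matrix.map_one _ (map_zero _) (map_one _), hPc, Complex.conj_conj, mul_add, mul_smul_comm,
      mul_smul_comm, mul_one, hP, add_comm]

theorem Matrix.map_conj_star_mul_mul_eq {m : Type*} [Fintype m] {T P D : Matrix m m ℂ}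
    (hT : T.map conj = P * T) (hPs : star P = P) (hD : P * D.map conj * P = D) :
    (star T * D * T).map conj = star T * D * T := by
  have hTs : (star T).map conj = star T * P := by
    rw [star_eq_conjTranspose, conjTranspose_map (conj : ℂ → ℂ) fun _ => rfl,
      ← star_eq_conjTranspose, hT, star_mul, hPs, star_eq_conjTranspose]
  calc (star T * D * T).map conj = star T * P * D.map conj * (P * T) := by
        rw [Matrix.map_mul, Matrix.map_mul, hTs, hT]
    _ = star T * (P * D.map conj * P) * T := by simp only [Matrix.mul_assoc]
    _ = star T * D * T := by rw [hD]

theorem Matrix.exists_unitary_forall_map_conj_star_mul_diagonal_mul {m ι : Type*} [Fintype m]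
    [DecidableEq m] {d : ι → m → ℂ} {τ : m → m} (hτ : Function.Involutive τ)
    (hd : ∀ i p, d i (τ p) = conj (d i p)) :
    ∃ T ∈ unitaryGroup m ℂ,
      ∀ i, (star T * diagonal (d i) * T).map conj = star T * diagonal (d i) * T := by
  let σ := hτ.toPerm τ
  have hσ : σ⁻¹ = σ := hτ.toPerm_symm
  let P := σ.permMatrix ℂ
  have hP : P * P = 1 := by rw [← permMatrix_mul, inv_eq_iff_mul_eq_one.mp hσ, permMatrix_one]
  have hPs : star P = P := by rw [star_eq_conjTranspose, conjTranspose_permMatrix, hσ]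
  obtain ⟨T, hT, hTP⟩ := exists_unitary_map_conj_eq_mul hP hPs (PEquiv.map_toMatrix _ _)
  refine ⟨T, hT, fun i => map_conj_star_mul_mul_eq hTP hPs ?_⟩
  have hdσ := permMatrix_mul_diagonal_mul_permMatrix_inv σ (fun p => conj (d i p))
  rw [hσ] at hdσ
  rw [diagonal_map (map_zero _), hdσ]
  congr 1
  ext p
  simp [σ, hd]

/-- If a commuting `n`-tuple of unitary `k × k` matrices is simultaneously conjugate (by a
unitary matrix `V`) to the tuple of its entrywise complex conjugates, then it is
simultaneously conjugate by a unitary matrix `W` to a tuple of matrices with real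
entries (which are then real orthogonal matrices). -/
theorem commuting_unitary_tuple_conjugate_to_real
    (n k : ℕ) (A : Fin n → Matrix (Fin k) (Fin k) ℂ)
    (hA : ∀ j, A j ∈ Matrix.unitaryGroup (Fin k) ℂ)
    (hcomm : ∀ i j, A i * A j = A j * A i)
    (V : Matrix (Fin k) (Fin k) ℂ) (hV : V ∈ Matrix.unitaryGroup (Fin k) ℂ)
    (hconj : ∀ j, V⁻¹ * A j * V = (A j).map (starRingEnd ℂ)) :
    ∃ W ∈ Matrix.unitaryGroup (Fin k) ℂ,
      ∀ j p q, ∃ r : ℝ, (W⁻¹ * A j * W) p q = (r : ℂ) := by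
  obtain ⟨U, hU, d, hAU⟩ := exists_unitary_forall_mul_eq_mul_diagonal_of_commute hcomm
    fun i j => Commute.star_right_of_mem_unitary (hA j) (hcomm i j)
  obtain ⟨σ, hσ⟩ := exists_perm_forall_apply_eq_conj_of_inv_mul_mul_eq_map_conj
    (UnitaryGroup.det_isUnit ⟨U, hU⟩) (UnitaryGroup.det_isUnit ⟨V, hV⟩) hAU hconj
  obtain ⟨τ, hτ, hτd⟩ := Function.exists_involutive_comp_eq_of_perm
    (f := fun p j => d j p) (g := fun v j => conj (v j))
    (fun v => funext fun j => Complex.conj_conj (v j)) σ (fun p => funext fun j => hσ j p)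
  obtain ⟨T, hT, hTreal⟩ :=
    exists_unitary_forall_map_conj_star_mul_diagonal_mul hτ fun j p => congr_fun (hτd p) j
  refine ⟨U * T, mul_mem hU hT, fun j p q => Complex.conj_eq_iff_real.mp ?_⟩
  have hW : (U * T)⁻¹ * A j * (U * T) = star T * diagonal (d j) * T := by
    rw [inv_eq_left_inv (Unitary.star_mul_self_of_mem (mul_mem hU hT)), star_mul]
    calc star T * star U * A j * (U * T) = star T * (star U * (A j * U)) * T := by
          simp only [Matrix.mul_assoc]
      _ = star T * diagonal (d j) * T := by
          rw [hAU, ← Matrix.mul_assoc (star U), Unitary.star_mul_self_of_mem hU, Matrix.one_mul]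
  rw [hW]
  exact congr_fun₂ (hTreal j) p q
end

section
/- Let R be a commutative ring, v ∈ R, and (y_i)_{i ≥ 0} a sequence in R. Write y(u) = Σ_{i≥0} y_i u^i. Suppose that in the formal power series ring R[[s,t]] the identity y(s)·y(t) = y(s + t + v·s·t) holds, where y(s + t + v·s·t) denotes the substitution of the power series s + t + v·s·t (which has zero constant term) into y. Then for all k, l ≥ 0, y_k · y_l = Σ_{i = max(k,l)}^{k+l} (i! / ((i−k)!·(i−l)!·(k+l−i)!)) · v^{k+l−i} · y_i. -/
/-!
Compare the coefficients of `s^k t^l` on both sides. On the left it is `y_k y_l`. On the right,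
the multinomial theorem gives
`(s + t + v s t)^i = Σ_{a+b+c=i} (i; a, b, c) v^c s^(a+c) t^(b+c)`,
and `a + c = k`, `b + c = l` force `(a, b, c) = (i - l, i - k, k + l - i)`, which is a valid
exponent triple exactly when `max k l ≤ i ≤ k + l`.
-/

/-- Substitution of a formal power series `g ∈ R[[s,t]]` with zero constant term into the
one-variable formal power series `y(u) = Σᵢ yᵢ uⁱ`, i.e. the series `Σᵢ yᵢ · gⁱ`.
Its `d`-th coefficient is `Σ_{i ≤ |d|} yᵢ · (coefficient of d in gⁱ)`; since `g` has zero
constant term, the `d`-th coefficient of `gⁱ` vanishes for `i > |d| = d 0 + d 1`, so the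
finite sum below is the full sum `Σᵢ yᵢ · (coefficient of d in gⁱ)`. -/
noncomputable def substInto {R : Type*} [CommRing R] (y : ℕ → R)
    (g : MvPowerSeries (Fin 2) R) : MvPowerSeries (Fin 2) R :=
  fun d => ∑ i ∈ Finset.range (d 0 + d 1 + 1), y i * MvPowerSeries.coeff (R := R) d (g ^ i)

open MvPowerSeries Finset

section

variable {R : Type*}

lemma single_zero_add_single_one_eq_iff {M : Type*} [AddCommMonoid M] (a b c d : M) :
    Finsupp.single (0 : Fin 2) a + Finsupp.single 1 b = Finsupp.single 0 c + Finsupp.single 1 d ↔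
      a = c ∧ b = d := by
  simp [Finsupp.ext_iff, Fin.forall_fin_two]

lemma coeff_substInto [CommRing R] (y : ℕ → R) (g : MvPowerSeries (Fin 2) R)
    (d : Fin 2 →₀ ℕ) :
    coeff d (substInto y g) = ∑ i ∈ range (d 0 + d 1 + 1), y i * coeff d (g ^ i) :=
  rfl

lemma coeff_substInto_X [CommRing R] (y : ℕ → R) (j : Fin 2) (d : Fin 2 →₀ ℕ) :
    coeff d (substInto y (X j)) = if d = Finsupp.single j (d j) then y (d j) else 0 := by
  rw [coeff_substInto, sum_eq_single (d j)]
  · simp [coeff_X_pow]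
  · rintro i - hi
    rw [coeff_X_pow, if_neg (by rintro rfl; simp at hi), mul_zero]
  · intro hj
    exact absurd (mem_range.2 (by fin_cases j <;> simp)) hj

lemma coeff_substInto_X_zero_mul_substInto_X_one [CommRing R] (y : ℕ → R) (k l : ℕ) :
    coeff (Finsupp.single 0 k + Finsupp.single 1 l) (substInto y (X 0) * substInto y (X 1)) =
      y k * y l := by
  rw [coeff_mul, sum_eq_single_of_mem (Finsupp.single 0 k, Finsupp.single 1 l) (by simp)]
  · simp [coeff_substInto_X]
  · rintro ⟨p, q⟩ hpq hne
    simp only [coeff_substInto_X, mul_ite, ite_mul, zero_mul, mul_zero]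
    split_ifs with hq hp <;> try rfl
    rw [HasAntidiagonal.mem_antidiagonal, hp, hq, single_zero_add_single_one_eq_iff] at hpq
    exact absurd (by rw [hp, hq, hpq.1, hpq.2]) hne

noncomputable def multiplicativeFormalGroupLaw [CommSemiring R] (v : R) : MvPowerSeries (Fin 2) R :=
  X 0 + X 1 + C v * X 0 * X 1

lemma multiplicativeFormalGroupLaw_pow [CommSemiring R] (v : R) (i : ℕ) :
    multiplicativeFormalGroupLaw v ^ i =
      ∑ e ∈ piAntidiag (univ : Finset (Fin 3)) i,
        monomial (Finsupp.single 0 (e 0 + e 2) + Finsupp.single 1 (e 1 + e 2))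
          (Nat.multinomial univ e * v ^ e 2) := by
  have hsum : multiplicativeFormalGroupLaw v = ∑ j, ![X 0, X 1, C v * X 0 * X 1] j := by
    simp [multiplicativeFormalGroupLaw, Fin.sum_univ_three]
  rw [hsum, sum_pow_eq_sum_piAntidiag]
  refine sum_congr rfl fun e _ => ?_
  simp only [Fin.prod_univ_three, Matrix.cons_val, X_def, ← monomial_zero_eq_C_apply,
    monomial_mul_monomial, monomial_pow, ← map_natCast (C (σ := Fin 2) (R := R))]
  congr 2
  · ext j; fin_cases j <;> simp
  · simp

lemma coeff_multiplicativeFormalGroupLaw_pow [CommSemiring R] (v : R) (k l i : ℕ) :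
    coeff (Finsupp.single 0 k + Finsupp.single 1 l) (multiplicativeFormalGroupLaw v ^ i) =
      if max k l ≤ i ∧ i ≤ k + l then
        (Nat.multinomial univ ![i - l, i - k, k + l - i] : R) * v ^ (k + l - i) else 0 := by
  have hsolve : ∀ e ∈ piAntidiag (univ : Finset (Fin 3)) i,
      (k = e 0 + e 2 ∧ l = e 1 + e 2) ↔ e = ![i - l, i - k, k + l - i] := by
    intro e he
    rw [mem_piAntidiag, Fin.sum_univ_three] at he
    simp only [funext_iff, Fin.forall_fin_succ, Fin.succ_zero_eq_one, Fin.succ_one_eq_two,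
      Matrix.cons_val, IsEmpty.forall_iff, and_true]
    omega
  rw [multiplicativeFormalGroupLaw_pow, map_sum]
  simp only [coeff_monomial, single_zero_add_single_one_eq_iff]
  rw [sum_congr rfl fun e he => if_congr (hsolve e he) rfl rfl, sum_ite_eq']
  refine if_congr ?_ (by simp) rfl
  rw [mem_piAntidiag, Fin.sum_univ_three]
  simp only [Matrix.cons_val, mem_univ, implies_true, and_true]
  omega

lemma coeff_substInto_multiplicativeFormalGroupLaw [CommRing R] (y : ℕ → R) (v : R)
    (k l : ℕ) :
    coeff (Finsupp.single 0 k + Finsupp.single 1 l)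
        (substInto y (multiplicativeFormalGroupLaw v)) =
      ∑ i ∈ Icc (max k l) (k + l),
        (Nat.multinomial univ ![i - l, i - k, k + l - i] : R) * v ^ (k + l - i) * y i := by
  have hdeg : (Finsupp.single 0 k + Finsupp.single 1 l : Fin 2 →₀ ℕ) 0 +
      (Finsupp.single 0 k + Finsupp.single 1 l : Fin 2 →₀ ℕ) 1 = k + l := by
    simp
  have hIcc : (range (k + l + 1)).filter (fun i => max k l ≤ i ∧ i ≤ k + l) =
      Icc (max k l) (k + l) := by
    ext i
    simp only [mem_filter, mem_range, mem_Icc]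
    omega
  simp only [coeff_substInto, hdeg, coeff_multiplicativeFormalGroupLaw_pow, mul_ite, mul_zero]
  rw [← sum_filter, hIcc]
  exact sum_congr rfl fun i _ => mul_comm _ _

end

/-- If a sequence `(yᵢ)` in a commutative ring `R` satisfies the formal power series
identity `y(s) · y(t) = y(s + t + v·s·t)` in `R[[s,t]]`, then
`y_k · y_l = Σ_{i = max(k,l)}^{k+l} (i! / ((i−k)!·(i−l)!·(k+l−i)!)) · v^{k+l−i} · yᵢ`
for all `k, l ≥ 0`. -/
theorem mul_eq_sum_multinomial_of_power_series_identity
    (R : Type*) [CommRing R] (v : R) (y : ℕ → R)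
    (h : substInto y (MvPowerSeries.X 0) * substInto y (MvPowerSeries.X 1) =
      substInto y (MvPowerSeries.X 0 + MvPowerSeries.X 1 +
        MvPowerSeries.C (σ := Fin 2) (R := R) v * MvPowerSeries.X 0 * MvPowerSeries.X 1)) :
    ∀ k l : ℕ, y k * y l = ∑ i ∈ Finset.Icc (max k l) (k + l),
      ((i.factorial / ((i - k).factorial * (i - l).factorial * (k + l - i).factorial) : ℕ) : R)
        * v ^ (k + l - i) * y i := by
  intro k l
  calc y k * y l
      = coeff (Finsupp.single 0 k + Finsupp.single 1 l)
          (substInto y (multiplicativeFormalGroupLaw v)) := by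
        rw [← coeff_substInto_X_zero_mul_substInto_X_one, h, multiplicativeFormalGroupLaw]
    _ = _ := by
      rw [coeff_substInto_multiplicativeFormalGroupLaw]
      refine sum_congr rfl fun i hi => ?_
      rw [mem_Icc, max_le_iff] at hi
      rw [Nat.multinomial_univ_three, show i - l + (i - k) + (k + l - i) = i by omega,
        Nat.mul_comm (i - l).factorial]
end
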